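/- For fixed lengths m_1, ..., m_{k-1}, the map sending a multiple partition (n^{(1)}, ..., n^{(k-1)}) (satisfying the gap conditions n^{(j)}_l ≥ n^{(j)}_{l+1} + 2j and n^{(j)}_{m_j} ≥ Δ_{(i;j)}) to the (k-1)-tuple of ordinary partitions (λ^{(1)}, ..., λ^{(k-1)}) defined by λ^{(j)}_l = n^{(j)}_l - Δ_{(i;j)} - 2j(m_j - l) is a bijection onto (k-1)-tuples of partitions with λ^{(j)} having at most m_j parts; it decreases the total weight by exactly N_1² + ... + N_{k-1}² + N_i + ... + N_{k-1}. -/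
import Mathlib

open Finset

namespace Stmt17Aux

lemma sq_Ico_sum (n : ℕ) (m : ℕ → ℕ) :
    ∀ d j, j ≤ n → n - j = d → (∑ x ∈ Finset.Ico j n, m x) ^ 2 =
      ∑ x ∈ Finset.Ico j n, (m x ^ 2 + 2 * m x * (∑ y ∈ Finset.Ico (x + 1) n, m y)) := by
  intro d
  induction d with
  | zero =>
    intro j hj hd
    have : j = n := by omega
    subst this
    simp
  | succ d ih =>
    intro j hj hd
    have hjn : j < n := by omega
    rw [Finset.sum_eq_sum_Ico_succ_bot hjn, Finset.sum_eq_sum_Ico_succ_bot hjn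
      (f := fun x => m x ^ 2 + 2 * m x * (∑ y ∈ Finset.Ico (x + 1) n, m y))]
    rw [← ih (j + 1) (by omega) (by omega)]
    ring

lemma swap_sum (n : ℕ) (t : ℕ → ℕ) :
    ∑ j ∈ Finset.range n, ∑ x ∈ Finset.Ico j n, t x =
      ∑ x ∈ Finset.range n, (x + 1) * t x := by
  have h1 : ∀ j ∈ Finset.range n, ∑ x ∈ Finset.Ico j n, t x
      = ∑ x ∈ Finset.range n, if j ≤ x then t x else 0 := by
    intro j _
    rw [← Finset.sum_filter]
    congr 1
    ext x
    simp only [Finset.mem_filter, Finset.mem_range, Finset.mem_Ico]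
    omega
  rw [Finset.sum_congr rfl h1, Finset.sum_comm]
  refine Finset.sum_congr rfl fun x hx => ?_
  simp only [Finset.mem_range] at hx
  have h2 : (Finset.range n).filter (fun j => j ≤ x) = Finset.range (x + 1) := by
    ext j; simp only [Finset.mem_filter, Finset.mem_range]; omega
  rw [← Finset.sum_filter, h2, Finset.sum_const, Finset.card_range, smul_eq_mul]

lemma swap_sum2 (n i : ℕ) (hi : 1 ≤ i) (m : ℕ → ℕ) :
    ∑ j ∈ (Finset.range n).filter (fun j => i ≤ j + 1), ∑ x ∈ Finset.Ico j n, m x =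
      ∑ x ∈ Finset.range n, (x + 2 - i) * m x := by
  rw [Finset.sum_filter]
  have h1 : ∀ j ∈ Finset.range n, (if i ≤ j + 1 then ∑ x ∈ Finset.Ico j n, m x else 0)
      = ∑ x ∈ Finset.range n, if i ≤ j + 1 ∧ j ≤ x then m x else 0 := by
    intro j _
    by_cases h : i ≤ j + 1
    · simp only [h, if_true, true_and]
      rw [← Finset.sum_filter]
      congr 1
      ext x
      simp only [Finset.mem_filter, Finset.mem_range, Finset.mem_Ico]
      omega
    · simp [h]
  rw [Finset.sum_congr rfl h1, Finset.sum_comm]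
  refine Finset.sum_congr rfl fun x hx => ?_
  simp only [Finset.mem_range] at hx
  have h3 : ∑ j ∈ Finset.range n, (if i ≤ j + 1 ∧ j ≤ x then m x else 0)
      = ∑ j ∈ (Finset.range n).filter (fun j => i ≤ j + 1 ∧ j ≤ x), m x := by
    rw [Finset.sum_filter]
  rw [h3]
  have h2 : (Finset.range n).filter (fun j => i ≤ j + 1 ∧ j ≤ x) = Finset.Ico (i - 1) (x + 1) := by
    ext j; simp only [Finset.mem_filter, Finset.mem_range, Finset.mem_Ico]; omega
  rw [h2, Finset.sum_const, Nat.card_Ico, smul_eq_mul]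
  congr 1
  omega

lemma core (n i : ℕ) (hi : 1 ≤ i) (m : ℕ → ℕ) :
    (∑ j ∈ Finset.range n,
      (m j * ((j + 1) + ((j + 1) + 1 - i) + 2 * (j + 1) * (∑ x ∈ Finset.Ico (j + 1) n, m x))
        + (j + 1) * (m j * (m j - 1))))
    = (∑ j ∈ Finset.range n, (∑ x ∈ Finset.Ico j n, m x) ^ 2)
      + ∑ j ∈ (Finset.range n).filter (fun j => i ≤ j + 1), ∑ x ∈ Finset.Ico j n, m x := by
  have hterm : ∀ j, m j * ((j + 1) + ((j + 1) + 1 - i) + 2 * (j + 1) * (∑ x ∈ Finset.Ico (j + 1) n, m x))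
      + (j + 1) * (m j * (m j - 1))
      = (j + 1) * (m j ^ 2 + 2 * m j * (∑ x ∈ Finset.Ico (j + 1) n, m x)) + (j + 2 - i) * m j := by
    intro j
    have h : (j + 1) + 1 - i = j + 2 - i := by omega
    rw [h]
    generalize (∑ x ∈ Finset.Ico (j + 1) n, m x) = S
    rcases m j with _ | a
    · ring
    · simp only [Nat.succ_sub_one]; ring
  rw [Finset.sum_congr rfl (fun j _ => hterm j), Finset.sum_add_distrib]
  rw [swap_sum2 n i hi m]
  congr 1
  rw [← swap_sum n (fun j => m j ^ 2 + 2 * m j * (∑ x ∈ Finset.Ico (j + 1) n, m x))]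
  refine Finset.sum_congr rfl fun j hj => ?_
  simp only [Finset.mem_range] at hj
  rw [sq_Ico_sum n m (n - j) j (by omega) rfl]

lemma gap_chain {M g : ℕ} (f : Fin M → ℕ)
    (h1 : ∀ l : Fin M, ∀ h : l.val + 1 < M, f ⟨l.val + 1, h⟩ + g ≤ f l) :
    ∀ d (a b : Fin M), a ≤ b → b.val - a.val = d → f b + g * (b.val - a.val) ≤ f a := by
  intro d
  induction d with
  | zero =>
    intro a b hab hd
    have : a = b := by
      apply Fin.ext
      have := Fin.le_def.mp hab
      omega
    subst this
    simp
  | succ d ih =>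
    intro a b hab hd
    have hab' := Fin.le_def.mp hab
    have ha1 : a.val + 1 < M := by have := b.isLt; omega
    have step := h1 a ha1
    have ih' := ih ⟨a.val + 1, ha1⟩ b (Fin.le_def.mpr (by simp; omega)) (by simp; omega)
    have hmul : g * (b.val - a.val) = g * (b.val - (a.val + 1)) + g := by
      rw [show b.val - a.val = (b.val - (a.val + 1)) + 1 from by omega, Nat.mul_succ]
    simp only [Fin.val_mk] at ih'
    omega

lemma c_le {M g D : ℕ} (f : Fin M → ℕ)
    (h1 : ∀ l : Fin M, ∀ h : l.val + 1 < M, f ⟨l.val + 1, h⟩ + g ≤ f l)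
    (h2 : ∀ _ : 0 < M, D ≤ f ⟨M - 1, by omega⟩) (l : Fin M) :
    D + g * (M - 1 - l.val) ≤ f l := by
  have hM : 0 < M := l.pos
  have hb := gap_chain f h1 ((M - 1) - l.val) l ⟨M - 1, by omega⟩
    (Fin.le_def.mpr (by simp; omega)) (by simp)
  simp only [Fin.val_mk] at hb
  have := h2 hM
  omega

lemma sub_anti {M g D : ℕ} (f : Fin M → ℕ)
    (h1 : ∀ l : Fin M, ∀ h : l.val + 1 < M, f ⟨l.val + 1, h⟩ + g ≤ f l)
    (h2 : ∀ _ : 0 < M, D ≤ f ⟨M - 1, by omega⟩) :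
    ∀ a b : Fin M, a ≤ b →
      f b - (D + g * (M - 1 - b.val)) ≤ f a - (D + g * (M - 1 - a.val)) := by
  intro a b hab
  have hab' := Fin.le_def.mp hab
  have hg := gap_chain f h1 (b.val - a.val) a b hab rfl
  have hb := c_le f h1 h2 b
  have key : g * (M - 1 - a.val) = g * (M - 1 - b.val) + g * (b.val - a.val) := by
    rw [show M - 1 - a.val = (M - 1 - b.val) + (b.val - a.val) from by
      have := b.isLt; omega, Nat.mul_add]
  omega

lemma sum_c (M D J : ℕ) :
    ∑ l : Fin M, (D + 2 * J * (M - 1 - l.val)) = M * D + J * (M * (M - 1)) := by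
  rw [Fin.sum_univ_eq_sum_range (fun l => D + 2 * J * (M - 1 - l)) M]
  rw [Finset.sum_add_distrib, Finset.sum_const, Finset.card_range, smul_eq_mul,
    ← Finset.mul_sum]
  congr 1
  have h : ∑ l ∈ Finset.range M, (M - 1 - l) = ∑ l ∈ Finset.range M, l :=
    Finset.sum_range_reflect (fun l => l) M
  rw [h, show 2 * J * ∑ l ∈ Finset.range M, l = J * ((∑ l ∈ Finset.range M, l) * 2) from by ring,
    Finset.sum_range_id_mul_two]

lemma fin_sum_filter {n : ℕ} (f : Fin n → ℕ) (p : Fin n → Prop) [DecidablePred p]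
    (q : ℕ → Prop) [DecidablePred q] (hpq : ∀ j : Fin n, p j ↔ q j.val) :
    ∑ j ∈ Finset.univ.filter p, f j
      = ∑ x ∈ (Finset.range n).filter q, (if h : x < n then f ⟨x, h⟩ else 0) := by
  rw [Finset.sum_filter, Finset.sum_filter]
  rw [← Fin.sum_univ_eq_sum_range (fun x => if q x then (if h : x < n then f ⟨x, h⟩ else 0) else 0) n]
  refine Finset.sum_congr rfl fun j _ => ?_
  by_cases h : p j
  · rw [if_pos h, if_pos ((hpq j).mp h), dif_pos j.isLt]
  · rw [if_neg h, if_neg (fun hq => h ((hpq j).mpr hq))]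

lemma filter_lt_Ico (a n : ℕ) : (Finset.range n).filter (fun x => a < x) = Finset.Ico (a + 1) n := by
  ext x; simp only [Finset.mem_filter, Finset.mem_range, Finset.mem_Ico]; omega

lemma filter_le_Ico (a n : ℕ) : (Finset.range n).filter (fun x => a ≤ x) = Finset.Ico a n := by
  ext x; simp only [Finset.mem_filter, Finset.mem_range, Finset.mem_Ico]; omega

end Stmt17Aux

def mnat (k : ℕ) (mv : Fin (k - 1) → ℕ) : ℕ → ℕ :=
  fun x => if h : x < k - 1 then mv ⟨x, h⟩ else 0

def dlt (k i : ℕ) (mv : Fin (k - 1) → ℕ) (j : Fin (k - 1)) : ℕ :=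
  (j.val + 1) + ((j.val + 1) + 1 - i) +
    2 * (j.val + 1) * (∑ j' ∈ Finset.univ.filter (fun j' : Fin (k-1) => j < j'), mv j')

def ccf (k i : ℕ) (mv : Fin (k - 1) → ℕ) (j : Fin (k - 1)) (l : ℕ) : ℕ :=
  dlt k i mv j + 2 * (j.val + 1) * (mv j - 1 - l)

open Stmt17Aux

/-- for fixed lengths m₁, …, m_{k-1}, the map
λ⁽ʲ⁾_l = n⁽ʲ⁾_l - Δ_{(i;j)} - 2j(m_j - l) is a bijection from multiple partitions
(with the gap and minimal-part conditions) onto (k-1)-tuples of partitions with at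
most m_j parts, decreasing the total weight by exactly N₁² + ⋯ + N_{k-1}² + N_i + ⋯
+ N_{k-1}, where N_j = m_j + ⋯ + m_{k-1}. -/
theorem stmt17 (k i : ℕ) (hk : 2 ≤ k) (hi1 : 1 ≤ i) (hik : i ≤ k)
    (mv : Fin (k - 1) → ℕ) :
    ∃ φ : {nn : (j : Fin (k - 1)) → Fin (mv j) → ℕ //
            (∀ j : Fin (k - 1), ∀ l : Fin (mv j), ∀ h : l.val + 1 < mv j,
              nn j ⟨l.val + 1, h⟩ + 2 * (j.val + 1) ≤ nn j l) ∧
            (∀ j : Fin (k - 1), ∀ h : 0 < mv j,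
              (j.val + 1) + ((j.val + 1) + 1 - i) +
                  2 * (j.val + 1) *
                    (∑ j' ∈ Finset.univ.filter (fun j' : Fin (k - 1) => j < j'), mv j') ≤
                nn j ⟨mv j - 1, by omega⟩)} →
          {lam : (j : Fin (k - 1)) → Fin (mv j) → ℕ //
            ∀ j : Fin (k - 1), ∀ a b : Fin (mv j), a ≤ b → lam j b ≤ lam j a},
      Function.Bijective φ ∧
      (∀ a, ∀ j : Fin (k - 1), ∀ l : Fin (mv j),
        ((φ a).val j l : ℤ) =
          (a.val j l : ℤ) -
            ((j.val + 1) + ((j.val + 1) + 1 - i : ℕ) +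
              2 * (j.val + 1) *
                (∑ j' ∈ Finset.univ.filter (fun j' : Fin (k - 1) => j < j'), mv j')) -
            2 * (j.val + 1) * (mv j - 1 - l.val)) ∧
      (∀ a, (∑ j : Fin (k - 1), ∑ l : Fin (mv j), a.val j l) =
          (∑ j : Fin (k - 1), ∑ l : Fin (mv j), (φ a).val j l) +
            ((∑ j : Fin (k - 1),
                (∑ j' ∈ Finset.univ.filter (fun j' : Fin (k - 1) => j ≤ j'), mv j') ^ 2) +
              (∑ j ∈ Finset.univ.filter (fun j : Fin (k - 1) => i ≤ j.val + 1),
                (∑ j' ∈ Finset.univ.filter (fun j' : Fin (k - 1) => j ≤ j'), mv j')))) := by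
  classical
  have hle : ∀ (nn : (j : Fin (k-1)) → Fin (mv j) → ℕ)
      (h1 : ∀ j : Fin (k-1), ∀ l : Fin (mv j), ∀ h : l.val + 1 < mv j,
        nn j ⟨l.val + 1, h⟩ + 2 * (j.val + 1) ≤ nn j l)
      (h2 : ∀ j : Fin (k-1), ∀ h : 0 < mv j, dlt k i mv j ≤ nn j ⟨mv j - 1, by omega⟩)
      (j : Fin (k-1)) (l : Fin (mv j)), ccf k i mv j l.val ≤ nn j l := by
    intro nn h1 h2 j l
    exact c_le (nn j) (h1 j) (h2 j) l
  refine ⟨fun nn => ⟨fun j l => nn.val j l - ccf k i mv j l.val,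
    fun j a b hab => sub_anti (nn.val j) (nn.prop.1 j) (nn.prop.2 j) a b hab⟩, ?_, ?_, ?_⟩
  · -- Bijective
    rw [Function.bijective_iff_has_inverse]
    refine ⟨fun lam => ⟨fun j l => lam.val j l + ccf k i mv j l.val, ?_, ?_⟩, ?_, ?_⟩
    · -- gap condition for the inverse
      intro j l h
      have m1 : lam.val j ⟨l.val + 1, h⟩ ≤ lam.val j l :=
        lam.prop j l ⟨l.val + 1, h⟩ (Fin.le_def.mpr (by simp))
      have m2 : ccf k i mv j l.val = ccf k i mv j (l.val + 1) + 2 * (j.val + 1) := by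
        simp only [ccf]
        rw [show mv j - 1 - l.val = (mv j - 1 - (l.val + 1)) + 1 from by omega, Nat.mul_succ]
        ring
      simp only [Fin.val_mk]
      omega
    · -- minimal part condition for the inverse
      intro j h
      simp only [Fin.val_mk]
      have m3 : ccf k i mv j (mv j - 1) = dlt k i mv j + 2 * (j.val + 1) * 0 := by
        simp only [ccf]
        rw [Nat.sub_self]
      rw [m3, Nat.mul_zero, Nat.add_zero]
      exact Nat.le_add_left _ _
    · -- left inverse
      intro nn
      apply Subtype.ext
      funext j l
      exact Nat.sub_add_cancel (hle nn.val nn.prop.1 nn.prop.2 j l)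
    · -- right inverse
      intro lam
      apply Subtype.ext
      funext j l
      show lam.val j l + ccf k i mv j l.val - ccf k i mv j l.val = lam.val j l
      exact Nat.add_sub_cancel _ _
  · -- the ℤ formula
    intro nn j l
    have h := hle nn.val nn.prop.1 nn.prop.2 j l
    show ((nn.val j l - ccf k i mv j l.val : ℕ) : ℤ) = _
    rw [Nat.cast_sub h]
    have hl := l.isLt
    simp only [ccf, dlt]
    push_cast
    rw [show ((mv j - 1 - l.val : ℕ) : ℤ) = (mv j : ℤ) - 1 - (l.val : ℤ) from by omega]
    ring
  · -- the weight identity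
    intro nn
    have e1 : (∑ j : Fin (k-1), ∑ l : Fin (mv j), nn.val j l)
        = (∑ j : Fin (k-1), ∑ l : Fin (mv j), (nn.val j l - ccf k i mv j l.val))
          + (∑ j : Fin (k-1), ∑ l : Fin (mv j), ccf k i mv j l.val) := by
      rw [← Finset.sum_add_distrib]
      refine Finset.sum_congr rfl fun j _ => ?_
      rw [← Finset.sum_add_distrib]
      refine Finset.sum_congr rfl fun l _ => ?_
      exact (Nat.sub_add_cancel (hle nn.val nn.prop.1 nn.prop.2 j l)).symm
    rw [e1]
    congr 1
    -- now: ∑ j, ∑ l, ccf k i mv j l.val = ∑ N² + ∑ filter N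
    have hmv : ∀ j : Fin (k-1), mnat k mv j.val = mv j := fun j => dif_pos j.isLt
    have h1 : ∀ j : Fin (k-1), (∑ l : Fin (mv j), ccf k i mv j l.val)
        = mv j * dlt k i mv j + (j.val + 1) * (mv j * (mv j - 1)) :=
      fun j => sum_c (mv j) (dlt k i mv j) (j.val + 1)
    have hdelta : ∀ j : Fin (k-1), dlt k i mv j = (j.val + 1) + ((j.val + 1) + 1 - i) +
        2 * (j.val + 1) * (∑ x ∈ Finset.Ico (j.val + 1) (k-1), mnat k mv x) := by
      intro j
      simp only [dlt]
      congr 1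
      rw [fin_sum_filter mv (fun j' => j < j') (fun x => j.val < x) (fun j' => Fin.lt_def),
        filter_lt_Ico]
      rfl
    have hNj : ∀ j : Fin (k-1),
        (∑ j' ∈ Finset.univ.filter (fun j' : Fin (k-1) => j ≤ j'), mv j')
          = ∑ x ∈ Finset.Ico j.val (k-1), mnat k mv x := by
      intro j
      rw [fin_sum_filter mv (fun j' => j ≤ j') (fun x => j.val ≤ x) (fun j' => Fin.le_def),
        filter_le_Ico]
      rfl
    calc (∑ j : Fin (k-1), ∑ l : Fin (mv j), ccf k i mv j l.val)
        = ∑ j : Fin (k-1), (mv j * dlt k i mv j + (j.val + 1) * (mv j * (mv j - 1))) :=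
          Finset.sum_congr rfl fun j _ => h1 j
      _ = ∑ x ∈ Finset.range (k-1),
            (mnat k mv x * ((x + 1) + ((x + 1) + 1 - i)
                + 2 * (x + 1) * (∑ y ∈ Finset.Ico (x + 1) (k-1), mnat k mv y))
              + (x + 1) * (mnat k mv x * (mnat k mv x - 1))) := by
          rw [← Fin.sum_univ_eq_sum_range (fun x =>
            (mnat k mv x * ((x + 1) + ((x + 1) + 1 - i)
                + 2 * (x + 1) * (∑ y ∈ Finset.Ico (x + 1) (k-1), mnat k mv y))
              + (x + 1) * (mnat k mv x * (mnat k mv x - 1)))) (k-1)]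
          refine Finset.sum_congr rfl fun j _ => ?_
          rw [hmv j, hdelta j]
      _ = (∑ x ∈ Finset.range (k-1), (∑ y ∈ Finset.Ico x (k-1), mnat k mv y) ^ 2)
            + ∑ x ∈ (Finset.range (k-1)).filter (fun x => i ≤ x + 1),
                ∑ y ∈ Finset.Ico x (k-1), mnat k mv y := core (k-1) i hi1 (mnat k mv)
      _ = (∑ j : Fin (k-1),
              (∑ j' ∈ Finset.univ.filter (fun j' : Fin (k-1) => j ≤ j'), mv j') ^ 2)
            + (∑ j ∈ Finset.univ.filter (fun j : Fin (k-1) => i ≤ j.val + 1),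
                (∑ j' ∈ Finset.univ.filter (fun j' : Fin (k-1) => j ≤ j'), mv j')) := by
          congr 1
          · rw [← Fin.sum_univ_eq_sum_range
              (fun x => (∑ y ∈ Finset.Ico x (k-1), mnat k mv y) ^ 2) (k-1)]
            exact (Finset.sum_congr rfl fun j _ => by rw [hNj j]).symm
          · rw [fin_sum_filter
              (fun j : Fin (k-1) => ∑ j' ∈ Finset.univ.filter (fun j' : Fin (k-1) => j ≤ j'), mv j')
              (fun j => i ≤ j.val + 1) (fun x => i ≤ x + 1) (fun j => Iff.rfl)]
            refine (Finset.sum_congr rfl fun x hx => ?_).symm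
            simp only [Finset.mem_filter, Finset.mem_range] at hx
            rw [dif_pos hx.1, hNj ⟨x, hx.1⟩]
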